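/- arXiv:2410.08488 — 4 statements merged into one kernel-verified Lean document; each statement's English description precedes it below -/
import Mathlib

section
/- Let H ∈ (1/2, 1). Then lim_{N→∞} S_N(H)/N^{2H} = 1/(2H(2H − 1)). Consequently, for any p ∈ (0,1) and c > 0, (N·p(1 − p) + 2·p·c·S_N(H))/N^{2H} → p·c/(H(2H − 1)) as N → ∞. -/
/-!
The summand `(N - x) * x ^ (2H - 2)` decreases in `x` on `[1, N]`, so `S_N(H)` lies between
`∫₁ᴺ (N - x) x ^ (2H - 2) dx` and that integral plus `N - 1`. The integral equals
`(N ^ 2H - N) / (2H - 1) - (N ^ 2H - 1) / 2H = N ^ 2H / (2H (2H - 1)) + O(N)`, and `N = o(N ^ 2H)`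
since `2H > 1`.
-/

open Filter

/-- `S_N(H) = Σ_{k=1}^{N−1} (N − k)·k^(2H−2)`. -/
noncomputable def S (N : ℕ) (H : ℝ) : ℝ :=
  ∑ k ∈ Finset.Icc 1 (N - 1), ((N : ℝ) - (k : ℕ)) * (k : ℝ) ^ (2 * H - 2)

open Set Topology

lemma antitoneOn_sub_mul_rpow {a : ℝ} (b : ℝ) (ha : a ≤ 0) :
    AntitoneOn (fun x : ℝ => (b - x) * x ^ a) (Ioc 0 b) := by
  intro x hx y hy hxy
  exact mul_le_mul (by linarith) (Real.rpow_le_rpow_of_nonpos hx.1 hxy ha)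
    (Real.rpow_nonneg hy.1.le a) (by linarith [hx.2])

lemma AntitoneOn.sum_Ico_le_integral_add {f : ℝ → ℝ} {a b : ℕ} (hab : a ≤ b)
    (hf : AntitoneOn f (Icc a b)) :
    ∑ i ∈ Finset.Ico a b, f i ≤ f a - f b + ∫ x in a..b, f x := by
  have htop := Finset.sum_Ico_succ_top hab (fun i : ℕ => f i)
  have hbot := Finset.sum_eq_sum_Ico_succ_bot (Nat.lt_succ_of_le hab) (fun i : ℕ => f i)
  have hshift := Finset.sum_Ico_add' (fun i : ℕ => f i) a b 1
  linarith [hf.sum_le_integral_Ico hab]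

lemma integral_sub_mul_rpow {s b : ℝ} (hs : 1 < s) (hb : 0 < b) :
    ∫ x in (1 : ℝ)..b, (b - x) * x ^ (s - 2) = (b ^ s - b) / (s - 1) - (b ^ s - 1) / s := by
  have hsplit : EqOn (fun x : ℝ => (b - x) * x ^ (s - 2))
      (fun x => b * x ^ (s - 2) - x ^ (s - 1)) (uIcc 1 b) := by
    intro x hx
    have hx0 : x ≠ 0 := (lt_of_lt_of_le (lt_min one_pos hb) hx.1).ne'
    simp only
    rw [show s - 1 = s - 2 + 1 by ring, Real.rpow_add_one hx0]
    ring
  have h2 : -1 < s - 2 := by linarith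
  have h1 : -1 < s - 1 := by linarith
  have hbs : b * b ^ (s - 1) = b ^ s := by
    rw [← Real.rpow_one_add' hb.le (by linarith), add_sub_cancel]
  rw [intervalIntegral.integral_congr hsplit, intervalIntegral.integral_sub
    ((intervalIntegral.intervalIntegrable_rpow' h2).const_mul _)
    (intervalIntegral.intervalIntegrable_rpow' h1), intervalIntegral.integral_const_mul,
    integral_rpow (Or.inl h2), integral_rpow (Or.inl h1), show s - 2 + 1 = s - 1 by ring,
    show s - 1 + 1 = s by ring, Real.one_rpow, Real.one_rpow, mul_div_assoc', mul_sub, hbs, mul_one]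

lemma tendsto_self_div_rpow_atTop {s : ℝ} (hs : 1 < s) :
    Tendsto (fun x : ℝ => x / x ^ s) atTop (𝓝 0) := by
  refine (tendsto_rpow_neg_atTop (sub_pos.2 hs)).congr' ?_
  filter_upwards [eventually_ge_atTop 0] with x hx
  rw [neg_sub, Real.rpow_one_sub' hx (by linarith)]

lemma tendsto_integral_sub_mul_rpow_div_rpow {s : ℝ} (hs : 1 < s) :
    Tendsto (fun b : ℝ => ((b ^ s - b) / (s - 1) - (b ^ s - 1) / s) / b ^ s) atTop
      (𝓝 (1 / (s * (s - 1)))) := by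
  have hinv : Tendsto (fun b : ℝ => (b ^ s)⁻¹) atTop (𝓝 0) :=
    tendsto_inv_atTop_zero.comp (tendsto_rpow_atTop (by linarith))
  have hlim := ((tendsto_const_nhds (x := (1 : ℝ))).sub (tendsto_self_div_rpow_atTop hs)).div_const
    (s - 1) |>.sub (((tendsto_const_nhds (x := (1 : ℝ))).sub hinv).div_const s)
  rw [show 1 / (s * (s - 1)) = (1 - 0) / (s - 1) - (1 - 0) / s by
    field_simp [show s - 1 ≠ 0 by linarith]; ring]
  refine hlim.congr' ?_
  filter_upwards [eventually_gt_atTop 0] with b hb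
  have : b ^ s ≠ 0 := (Real.rpow_pos_of_pos hb s).ne'
  field_simp

lemma S_eq_sum_Ico (N : ℕ) (H : ℝ) :
    S N H = ∑ k ∈ Finset.Ico 1 N, ((N : ℝ) - k) * (k : ℝ) ^ (2 * H - 2) := by
  rw [S, show Finset.Icc 1 (N - 1) = Finset.Ico 1 N by cases N <;> rfl]

variable {H : ℝ}

lemma antitoneOn_S_summand (hH : H ≤ 1) (N : ℕ) :
    AntitoneOn (fun x : ℝ => (N - x) * x ^ (2 * H - 2)) (Icc ((1 : ℕ) : ℝ) N) :=
  (antitoneOn_sub_mul_rpow N (by linarith)).mono fun x hx => ⟨by simp at hx; linarith [hx.1], hx.2⟩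

lemma integral_le_S (hH : H ≤ 1) {N : ℕ} (hN : 1 ≤ N) :
    ∫ x in (1 : ℝ)..N, (N - x) * x ^ (2 * H - 2) ≤ S N H := by
  simpa [S_eq_sum_Ico] using (antitoneOn_S_summand hH N).integral_le_sum_Ico hN

lemma S_le_integral_add (hH : H ≤ 1) {N : ℕ} (hN : 1 ≤ N) :
    S N H ≤ N - 1 + ∫ x in (1 : ℝ)..N, (N - x) * x ^ (2 * H - 2) := by
  simpa [S_eq_sum_Ico] using (antitoneOn_S_summand hH N).sum_Ico_le_integral_add hN

theorem tendsto_S_div_rpow (hH0 : 1 / 2 < H) (hH1 : H < 1) :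
    Tendsto (fun N : ℕ => S N H / (N : ℝ) ^ (2 * H)) atTop (𝓝 (1 / (2 * H * (2 * H - 1)))) := by
  have hs : 1 < 2 * H := by linarith
  have hN := tendsto_natCast_atTop_atTop (R := ℝ)
  have hlower : Tendsto (fun N : ℕ => (∫ x in (1 : ℝ)..N, (N - x) * x ^ (2 * H - 2)) /
      (N : ℝ) ^ (2 * H)) atTop (𝓝 (1 / (2 * H * (2 * H - 1)))) := by
    refine ((tendsto_integral_sub_mul_rpow_div_rpow hs).comp hN).congr' ?_
    filter_upwards [eventually_ge_atTop 1] with N hN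
    rw [Function.comp_apply, integral_sub_mul_rpow hs (by exact_mod_cast hN)]
  have hupper := hlower.add ((tendsto_self_div_rpow_atTop hs).comp hN)
  rw [add_zero] at hupper
  refine tendsto_of_tendsto_of_tendsto_of_le_of_le' hlower hupper ?_ ?_ <;>
    filter_upwards [eventually_ge_atTop 1] with N hN
  · gcongr
    exact integral_le_S hH1.le hN
  · rw [Function.comp_apply, ← add_div]
    gcongr
    linarith [S_le_integral_add hH1.le hN]

/-- For `H ∈ (1/2, 1)`, `S_N(H)/N^(2H) → 1/(2H(2H − 1))`, and consequently for
`p ∈ (0,1)` and `c > 0`,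
`(N·p(1 − p) + 2·p·c·S_N(H))/N^(2H) → p·c/(H(2H − 1))`. -/
theorem S_fractional_growth (H : ℝ) (hH0 : 1 / 2 < H) (hH1 : H < 1) :
    Tendsto (fun N : ℕ => S N H / (N : ℝ) ^ (2 * H)) atTop
      (nhds (1 / (2 * H * (2 * H - 1)))) ∧
    ∀ p c : ℝ, 0 < p → p < 1 → 0 < c →
      Tendsto
        (fun N : ℕ => ((N : ℝ) * (p * (1 - p)) + 2 * p * c * S N H) / (N : ℝ) ^ (2 * H))
        atTop (nhds (p * c / (H * (2 * H - 1)))) := by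
  have hS := tendsto_S_div_rpow hH0 hH1
  refine ⟨hS, fun p c _ _ _ => ?_⟩
  have hlin := (((tendsto_self_div_rpow_atTop (s := 2 * H) (by linarith)).comp
    tendsto_natCast_atTop_atTop).const_mul (p * (1 - p))).add (hS.const_mul (2 * p * c))
  convert hlin using 2 with N
  · simp only [Function.comp_apply]
    ring
  · field_simp [show H ≠ 0 by linarith]
    ring
end

section
/- Let (Ω, P) be a probability space, p ∈ (0,1), H ∈ (1/2, 1), c > 0, and let (ξ_i)_{i≥1} be a sequence of random variables taking values in {0,1} almost surely with P(ξ_i = 1) = p for all i and P(ξ_i = 1, ξ_j = 1) = p(p + c|i − j|^{2H−2}) for all i ≠ j. Then Var(ξ_1 + ⋯ + ξ_N)/N^{2H} → p·c/(H(2H − 1)) as N → ∞; in particular the variance of the fractional binomial variable B_N(p, H, c) is asymptotically proportional to N raised to the fractional power 2H. -/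
open MeasureTheory ProbabilityTheory Filter Set Finset Topology

/-!
For `{0,1}`-valued variables the covariances are read off the one- and two-point probabilities:
`p (1 - p)` on the diagonal and `p c |i - j| ^ (2H - 2)` off it, so that
`Var B_N = N p (1 - p) + 2 p c ∑_{k<N} (N - k) k ^ (2H - 2)`.
Since `2H > 1` the diagonal part is `o(N ^ 2H)`, while the second sum divided by `N ^ 2H` is a
right-endpoint Riemann sum of `(1 - x) x ^ (2H - 2)`, which is antitone and integrable on `(0, 1]`
though unbounded at `0`; comparing it with integrals over the cells gives the limit
`2 p c ∫₀¹ (1 - x) x ^ (2H - 2) dx = p c / (H (2H - 1))`.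
-/

section RiemannSum

variable {φ : ℝ → ℝ} {a b : ℝ}

lemma AntitoneOn.mul_le_intervalIntegral (hφ : AntitoneOn φ (Ioc a b)) (hab : a ≤ b)
    (hint : IntervalIntegrable φ volume a b) : (b - a) * φ b ≤ ∫ x in a..b, φ x :=
  calc (b - a) * φ b = ∫ _ in a..b, φ b := by simp
    _ ≤ ∫ x in a..b, φ x := intervalIntegral.integral_mono_on_of_le_Ioo hab
        intervalIntegrable_const hint fun x hx =>
          hφ ⟨hx.1, hx.2.le⟩ ⟨hx.1.trans hx.2, le_rfl⟩ hx.2.le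

lemma AntitoneOn.intervalIntegral_le_mul (hφ : AntitoneOn φ (Icc a b)) (hab : a ≤ b)
    (hint : IntervalIntegrable φ volume a b) : ∫ x in a..b, φ x ≤ (b - a) * φ a :=
  calc ∫ x in a..b, φ x ≤ ∫ _ in a..b, φ a := intervalIntegral.integral_mono_on hab
        hint intervalIntegrable_const fun x hx => hφ ⟨le_rfl, hab⟩ hx hx.1
    _ = (b - a) * φ a := by simp

lemma natCast_div_mem_Icc {k N : ℕ} (hk : k ≤ N) : (k : ℝ) / N ∈ Icc (0 : ℝ) 1 :=
  ⟨by positivity, div_le_one_of_le₀ (by exact_mod_cast hk) (by positivity)⟩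

lemma IntervalIntegrable.of_mem_Icc {c d : ℝ} (hint : IntervalIntegrable φ volume a b)
    (hc : c ∈ Icc a b) (hd : d ∈ Icc a b) : IntervalIntegrable φ volume c d :=
  hint.mono_set (uIcc_subset_uIcc (Icc_subset_uIcc hc) (Icc_subset_uIcc hd))

lemma AntitoneOn.sum_div_le_intervalIntegral (hφ : AntitoneOn φ (Ioc 0 1))
    (hint : IntervalIntegrable φ volume 0 1) {N : ℕ} (hN : 0 < N) :
    (∑ k ∈ range N, φ ((k + 1) / N)) / N ≤ ∫ x in 0..1, φ x := by
  set t : ℕ → ℝ := fun k => (k : ℝ) / N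
  have ht : ∀ k < N, t k ∈ Icc (0 : ℝ) 1 ∧ t (k + 1) ∈ Icc (0 : ℝ) 1 := fun k hk =>
    ⟨natCast_div_mem_Icc hk.le, natCast_div_mem_Icc hk⟩
  calc (∑ k ∈ range N, φ ((k + 1) / N)) / N
      = ∑ k ∈ range N, (t (k + 1) - t k) * φ (t (k + 1)) := by
        rw [sum_div]
        refine sum_congr rfl fun k _ => ?_
        simp only [t]; push_cast; ring
    _ ≤ ∑ k ∈ range N, ∫ x in t k..t (k + 1), φ x := by
      refine sum_le_sum fun k hk => ?_
      obtain ⟨htk, htk'⟩ := ht k (mem_range.1 hk)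
      exact (hφ.mono (Ioc_subset_Ioc htk.1 htk'.2)).mul_le_intervalIntegral
        (by simp only [t]; gcongr; simp) (hint.of_mem_Icc htk htk')
    _ = ∫ x in (0 : ℝ)..1, φ x := by
      rw [intervalIntegral.sum_integral_adjacent_intervals fun k hk =>
        hint.of_mem_Icc (ht k hk).1 (ht k hk).2]
      simp [t, (Nat.cast_pos.2 hN).ne']

lemma AntitoneOn.intervalIntegral_le_sum_div (hφ : AntitoneOn φ (Ioc 0 1)) (hφ1 : 0 ≤ φ 1)
    (hint : IntervalIntegrable φ volume 0 1) (M : ℕ) :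
    ∫ x in (1 / (M + 1 : ℕ) : ℝ)..1, φ x
      ≤ (∑ k ∈ range (M + 1), φ ((k + 1) / (M + 1 : ℕ))) / (M + 1 : ℕ) := by
  set t : ℕ → ℝ := fun k => ((k + 1 : ℕ) : ℝ) / (M + 1 : ℕ)
  have ht : ∀ k ≤ M, t k ∈ Icc (0 : ℝ) 1 := fun k hk => natCast_div_mem_Icc (by omega)
  have htM : t M = 1 := div_self (by positivity)
  calc ∫ x in (1 / (M + 1 : ℕ) : ℝ)..1, φ x
      = ∑ k ∈ range M, ∫ x in t k..t (k + 1), φ x := by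
        rw [intervalIntegral.sum_integral_adjacent_intervals fun k hk =>
          hint.of_mem_Icc (ht k hk.le) (ht (k + 1) hk), htM]
        simp [t]
    _ ≤ ∑ k ∈ range M, φ (t k) / (M + 1 : ℕ) := by
      refine sum_le_sum fun k hk => ?_
      have hk : k < M := mem_range.1 hk
      have htk := ht k hk.le
      have htk' := ht (k + 1) hk
      have hpos : 0 < t k := by positivity
      refine ((hφ.mono (Icc_subset_Ioc hpos htk'.2)).intervalIntegral_le_mul ?_
        (hint.of_mem_Icc htk htk')).trans_eq ?_
      · simp only [t]; gcongr; simp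
      · simp only [t]; push_cast; ring
    _ ≤ ∑ k ∈ range (M + 1), φ (t k) / (M + 1 : ℕ) := by
      rw [sum_range_succ, htM]
      exact le_add_of_nonneg_right (by positivity)
    _ = _ := by simp [sum_div, t]

theorem AntitoneOn.tendsto_sum_div (hφ : AntitoneOn φ (Ioc 0 1)) (hφ1 : 0 ≤ φ 1)
    (hint : IntervalIntegrable φ volume 0 1) :
    Tendsto (fun N : ℕ => (∑ k ∈ range N, φ ((k + 1) / N)) / N) atTop
      (𝓝 (∫ x in 0..1, φ x)) := by
  have htail : Tendsto (fun N : ℕ => ∫ x in (1 / N : ℝ)..1, φ x) atTop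
      (𝓝 (∫ x in 0..1, φ x)) := by
    have hcont := intervalIntegral.continuousOn_primitive_interval_left
      ((intervalIntegrable_iff' (f := φ)).1 hint) 0 left_mem_uIcc
    refine hcont.tendsto.comp (tendsto_nhdsWithin_iff.2 ⟨tendsto_one_div_atTop_nhds_zero_nat, ?_⟩)
    filter_upwards with N
    simpa using Nat.cast_inv_le_one (α := ℝ) N
  refine tendsto_of_tendsto_of_tendsto_of_le_of_le' htail tendsto_const_nhds ?_ ?_
  · filter_upwards [eventually_gt_atTop 0] with N hN
    obtain ⟨M, rfl⟩ : ∃ M, N = M + 1 := ⟨N - 1, by omega⟩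
    exact hφ.intervalIntegral_le_sum_div hφ1 hint M
  · filter_upwards [eventually_gt_atTop 0] with N hN
    exact hφ.sum_div_le_intervalIntegral hint hN

end RiemannSum

lemma integral_one_sub_mul_rpow {α : ℝ} (hα : -1 < α) :
    ∫ x in (0 : ℝ)..1, (1 - x) * x ^ α = 1 / ((α + 1) * (α + 2)) := by
  have hα1 : α + 1 ≠ 0 := by linarith
  have hα2 : α + 2 ≠ 0 := by linarith
  have hsplit : (fun x : ℝ => (1 - x) * x ^ α) = fun x => x ^ α - x ^ (α + 1) := by
    funext x
    rcases eq_or_ne x 0 with rfl | hx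
    · simp [Real.zero_rpow hα1]
    · rw [Real.rpow_add_one hx]; ring
  rw [hsplit, intervalIntegral.integral_sub (intervalIntegral.intervalIntegrable_rpow' hα)
    (intervalIntegral.intervalIntegrable_rpow' (by linarith)), integral_rpow (Or.inl hα),
    integral_rpow (Or.inl (by linarith)), add_assoc, one_add_one_eq_two, Real.one_rpow,
    Real.one_rpow, Real.zero_rpow hα1, Real.zero_rpow hα2]
  field_simp
  ring

theorem tendsto_sum_sub_mul_rpow_div {α : ℝ} (h1 : -1 < α) (h2 : α < 0) :
    Tendsto (fun N : ℕ => (∑ k ∈ range N, ((N : ℝ) - k) * (k : ℝ) ^ α) / (N : ℝ) ^ (α + 2))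
      atTop (𝓝 (1 / ((α + 1) * (α + 2)))) := by
  set φ : ℝ → ℝ := fun x => (1 - x) * x ^ α
  have hφ : AntitoneOn φ (Ioc 0 1) := fun x hx y hy hxy =>
    mul_le_mul (by linarith) (Real.rpow_le_rpow_of_nonpos hx.1 hxy h2.le)
      (Real.rpow_nonneg hy.1.le _) (by linarith [hx.2])
  have hint : IntervalIntegrable φ volume 0 1 :=
    (intervalIntegral.intervalIntegrable_rpow' h1).continuousOn_mul (by fun_prop)
  -- `0 ^ α = 0` for `α ≠ 0`, so the `k = 0` term vanishes and the sum shifts to right endpoints.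
  have hφ0 : φ 0 = 0 := by simp [φ, Real.zero_rpow h2.ne]
  have hφ1 : φ 1 = 0 := by simp [φ]
  rw [← integral_one_sub_mul_rpow h1]
  refine (hφ.tendsto_sum_div hφ1.ge hint).congr' ?_
  filter_upwards [eventually_gt_atTop 0] with N hN
  have hN' : (0 : ℝ) < N := Nat.cast_pos.2 hN
  have hshift : ∑ k ∈ range N, φ ((k + 1) / N) = ∑ k ∈ range N, φ (k / N) := by
    have := sum_range_succ' (fun k : ℕ => φ (k / N)) N
    rw [sum_range_succ, div_self hN'.ne', hφ1, Nat.cast_zero, zero_div, hφ0] at this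
    simpa using this.symm
  rw [hshift, sum_div, sum_div]
  refine sum_congr rfl fun k _ => ?_
  simp only [φ]
  rw [Real.div_rpow k.cast_nonneg hN'.le, Real.rpow_add hN', Real.rpow_two]
  field_simp

-- The diagonal is counted twice on the right; adding it once on the left avoids a subtraction.
theorem sum_range_sum_range_dist_add {M : Type*} [AddCommMonoid M] (f : ℕ → M) (N : ℕ) :
    ∑ i ∈ range N, ∑ j ∈ range N, f (Nat.dist i j) + N • f 0
      = 2 • ∑ k ∈ range N, (N - k) • f k := by
  induction N with
  | zero => simp
  | succ N ih =>
    have hreflect : ∑ j ∈ range N, f (N - j) = ∑ k ∈ range N, f (k + 1) := by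
      rw [← sum_range_reflect]
      exact sum_congr rfl fun j hj => by rw [Finset.mem_range] at hj; congr 1; omega
    have hrow : ∀ i ∈ range N, ∑ j ∈ range (N + 1), f (Nat.dist i j)
        = ∑ j ∈ range N, f (Nat.dist i j) + f (N - i) := fun i hi => by
      rw [sum_range_succ, Nat.dist_eq_sub_of_le (Finset.mem_range.1 hi).le]
    have hlast : ∑ j ∈ range (N + 1), f (Nat.dist N j) = ∑ j ∈ range N, f (N - j) + f 0 := by
      rw [sum_range_succ, Nat.dist_self]
      congr 1
      exact sum_congr rfl fun j hj => by rw [Nat.dist_eq_sub_of_le_right (Finset.mem_range.1 hj).le]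
    have hweights : ∑ k ∈ range (N + 1), (N + 1 - k) • f k
        = ∑ k ∈ range N, (N - k) • f k + (f 0 + ∑ k ∈ range N, f (k + 1)) := by
      have hsplit : ∀ k ∈ range (N + 1), (N + 1 - k) • f k = (N - k) • f k + f k := fun k hk => by
        rw [Nat.sub_add_comm (Finset.mem_range_succ_iff.1 hk), succ_nsmul]
      rw [sum_congr rfl hsplit, sum_add_distrib, sum_range_succ, Nat.sub_self, zero_smul, add_zero,
        sum_range_succ', add_comm (∑ k ∈ range N, f (k + 1))]
    rw [sum_range_succ, sum_congr rfl hrow, sum_add_distrib, hlast, hweights, smul_add, ← ih,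
      hreflect, succ_nsmul, two_nsmul]
    abel

lemma Nat.cast_dist {R : Type*} [Ring R] [LinearOrder R] [IsStrictOrderedRing R] (i j : ℕ) :
    (Nat.dist i j : R) = |(i : R) - j| := by
  rcases le_total i j with h | h
  · rw [Nat.dist_eq_sub_of_le h, Nat.cast_sub h, abs_sub_comm, abs_of_nonneg (by simpa)]
  · rw [Nat.dist_eq_sub_of_le_right h, Nat.cast_sub h, abs_of_nonneg (by simpa)]

section ZeroOne

variable {Ω : Type*} [MeasurableSpace Ω] {P : Measure Ω} {X Y : Ω → ℝ}

lemma ae_eq_indicator_one_of_ae_zero_or_one (h : ∀ᵐ ω ∂P, X ω = 0 ∨ X ω = 1) :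
    X =ᵐ[P] {ω | X ω = 1}.indicator 1 := by
  filter_upwards [h] with ω hω
  rcases hω with hω | hω <;> simp [hω]

lemma memLp_of_ae_zero_or_one [IsFiniteMeasure P] (hX : Measurable X)
    (h : ∀ᵐ ω ∂P, X ω = 0 ∨ X ω = 1) (q : ENNReal) : MemLp X q P := by
  have hXs : MeasurableSet {ω | X ω = 1} := hX (measurableSet_singleton 1)
  exact ((memLp_const (1 : ℝ)).indicator hXs).ae_eq (ae_eq_indicator_one_of_ae_zero_or_one h).symm

lemma covariance_of_ae_zero_or_one [IsProbabilityMeasure P] (hX : Measurable X)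
    (hY : Measurable Y) (hX01 : ∀ᵐ ω ∂P, X ω = 0 ∨ X ω = 1) (hY01 : ∀ᵐ ω ∂P, Y ω = 0 ∨ Y ω = 1) :
    cov[X, Y; P] = P.real ({ω | X ω = 1} ∩ {ω | Y ω = 1})
      - P.real {ω | X ω = 1} * P.real {ω | Y ω = 1} := by
  have hXs : MeasurableSet {ω | X ω = 1} := hX (measurableSet_singleton 1)
  have hYs : MeasurableSet {ω | Y ω = 1} := hY (measurableSet_singleton 1)
  have hXi := ae_eq_indicator_one_of_ae_zero_or_one hX01
  have hYi := ae_eq_indicator_one_of_ae_zero_or_one hY01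
  rw [covariance_eq_sub (memLp_of_ae_zero_or_one hX hX01 2) (memLp_of_ae_zero_or_one hY hY01 2),
    integral_congr_ae hXi, integral_congr_ae hYi, integral_congr_ae (hXi.mul hYi),
    ← inter_indicator_one, integral_indicator_one (hXs.inter hYs), integral_indicator_one hXs,
    integral_indicator_one hYs]

end ZeroOne

structure IsGBP {Ω : Type*} [MeasurableSpace Ω] (P : Measure Ω) (p H c : ℝ) (ξ : ℕ → Ω → ℝ) :
    Prop where
  measurable : ∀ i, Measurable (ξ i)
  ae_zero_or_one : ∀ i, ∀ᵐ ω ∂P, ξ i ω = 0 ∨ ξ i ω = 1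
  measure_setOf_eq_one : ∀ i, P {ω | ξ i ω = 1} = ENNReal.ofReal p
  measure_setOf_eq_one_inter : ∀ i j, i ≠ j → P ({ω | ξ i ω = 1} ∩ {ω | ξ j ω = 1}) =
    ENNReal.ofReal (p * (p + c * |(i : ℝ) - (j : ℝ)| ^ (2 * H - 2)))

namespace IsGBP

variable {Ω : Type*} [MeasurableSpace Ω] {P : Measure Ω} [IsProbabilityMeasure P] {p H c : ℝ}
  {ξ : ℕ → Ω → ℝ}

lemma covariance (hξ : IsGBP P p H c ξ) (hp : 0 < p) (hc : 0 ≤ c) (hH : H ≠ 1) (i j : ℕ) :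
    cov[ξ i, ξ j; P]
      = (if i = j then p * (1 - p) else 0) + p * c * (Nat.dist i j : ℝ) ^ (2 * H - 2) := by
  rw [covariance_of_ae_zero_or_one (hξ.measurable i) (hξ.measurable j) (hξ.ae_zero_or_one i)
    (hξ.ae_zero_or_one j)]
  rcases eq_or_ne i j with rfl | hij
  · rw [inter_self, measureReal_def, hξ.measure_setOf_eq_one, ENNReal.toReal_ofReal hp.le,
      Nat.dist_self, Nat.cast_zero, Real.zero_rpow (by contrapose! hH; linarith), if_pos rfl]
    ring
  · rw [measureReal_def, measureReal_def, measureReal_def, hξ.measure_setOf_eq_one_inter i j hij,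
      hξ.measure_setOf_eq_one, hξ.measure_setOf_eq_one, ENNReal.toReal_ofReal hp.le,
      ENNReal.toReal_ofReal (by positivity), if_neg hij, Nat.cast_dist]
    ring

lemma variance_sum (hξ : IsGBP P p H c ξ) (hp : 0 < p) (hc : 0 ≤ c) (hH : H ≠ 1) (N : ℕ) :
    variance (fun ω => ∑ i ∈ range N, ξ i ω) P = N * (p * (1 - p))
      + 2 * (p * c) * ∑ k ∈ range N, ((N : ℝ) - k) * (k : ℝ) ^ (2 * H - 2) := by
  have hdist := sum_range_sum_range_dist_add (fun k => (k : ℝ) ^ (2 * H - 2)) N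
  simp only [Nat.cast_zero, Real.zero_rpow (by contrapose! hH; linarith : 2 * H - 2 ≠ 0),
    smul_zero, add_zero, nsmul_eq_mul] at hdist
  rw [variance_fun_sum' fun i _ =>
    memLp_of_ae_zero_or_one (hξ.measurable i) (hξ.ae_zero_or_one i) 2]
  simp_rw [hξ.covariance hp hc hH, sum_add_distrib, sum_ite_eq, ← mul_sum, hdist]
  rw [sum_congr rfl fun k hk => if_pos hk, sum_const, card_range, nsmul_eq_mul, Nat.cast_ofNat,
    sum_congr rfl fun k hk => by rw [Nat.cast_sub (Finset.mem_range.1 hk).le]]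
  ring

end IsGBP

lemma tendsto_natCast_div_rpow_atTop {s : ℝ} (hs : 1 < s) :
    Tendsto (fun N : ℕ => (N : ℝ) / (N : ℝ) ^ s) atTop (𝓝 0) := by
  refine ((tendsto_rpow_neg_atTop (by linarith : 0 < s - 1)).comp
    tendsto_natCast_atTop_atTop).congr' ?_
  filter_upwards [eventually_gt_atTop 0] with N hN
  rw [Function.comp_apply, neg_sub, Real.rpow_sub (Nat.cast_pos.2 hN), Real.rpow_one]

theorem gbp_variance_asymptotics_lrd_general {Ω : Type*} [MeasurableSpace Ω] (P : Measure Ω)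
    [IsProbabilityMeasure P] (p H c : ℝ) (hp0 : 0 < p)
    (hH0 : 1 / 2 < H) (hH1 : H < 1) (hc : 0 < c)
    (ξ : ℕ → Ω → ℝ) (hm : ∀ i, Measurable (ξ i))
    (h01 : ∀ i, ∀ᵐ ω ∂P, ξ i ω = 0 ∨ ξ i ω = 1)
    (hP1 : ∀ i, P {ω | ξ i ω = 1} = ENNReal.ofReal p)
    (hP2 : ∀ i j, i ≠ j → P ({ω | ξ i ω = 1} ∩ {ω | ξ j ω = 1}) =
      ENNReal.ofReal (p * (p + c * |(i : ℝ) - (j : ℝ)| ^ (2 * H - 2)))) :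
    Tendsto
      (fun N : ℕ => variance (fun ω => ∑ i ∈ Finset.range N, ξ i ω) P / (N : ℝ) ^ (2 * H))
      atTop (nhds (p * c / (H * (2 * H - 1)))) := by
  have hξ : IsGBP P p H c ξ := ⟨hm, h01, hP1, hP2⟩
  have hdiag := tendsto_natCast_div_rpow_atTop (by linarith : 1 < 2 * H)
  have hoff := tendsto_sum_sub_mul_rpow_div (α := 2 * H - 2) (by linarith) (by linarith)
  rw [sub_add_cancel] at hoff
  convert (hdiag.const_mul (p * (1 - p))).add (hoff.const_mul (2 * (p * c))) using 2 with N
  · rw [hξ.variance_sum hp0 hc.le hH1.ne]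
    ring
  · have hH : H ≠ 0 := by linarith
    have hH' : 2 * H - 1 ≠ 0 := by linarith
    field_simp
    ring

/-- For a GBP with `p ∈ (0,1)`, `H ∈ (1/2, 1)`, `c > 0`, the variance of
`B_N = ξ_1 + ⋯ + ξ_N` satisfies `Var(B_N)/N^(2H) → p·c/(H(2H − 1))` as `N → ∞`. -/
theorem gbp_variance_asymptotics_lrd {Ω : Type*} [MeasurableSpace Ω] (P : Measure Ω)
    [IsProbabilityMeasure P] (p H c : ℝ) (hp0 : 0 < p) (hp1 : p < 1)
    (hH0 : 1 / 2 < H) (hH1 : H < 1) (hc : 0 < c)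
    (ξ : ℕ → Ω → ℝ) (hm : ∀ i, Measurable (ξ i))
    (h01 : ∀ i, ∀ᵐ ω ∂P, ξ i ω = 0 ∨ ξ i ω = 1)
    (hP1 : ∀ i, P {ω | ξ i ω = 1} = ENNReal.ofReal p)
    (hP2 : ∀ i j, i ≠ j → P ({ω | ξ i ω = 1} ∩ {ω | ξ j ω = 1}) =
      ENNReal.ofReal (p * (p + c * |(i : ℝ) - (j : ℝ)| ^ (2 * H - 2)))) :
    Tendsto
      (fun N : ℕ => variance (fun ω => ∑ i ∈ Finset.range N, ξ i ω) P / (N : ℝ) ^ (2 * H))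
      atTop (nhds (p * c / (H * (2 * H - 1)))) :=
  gbp_variance_asymptotics_lrd_general P p H c hp0 hH0 hH1 hc ξ hm h01 hP1 hP2
end

section
/- Let (Ω, P) be a probability space, p ∈ (0,1), H ∈ (0, 1/2), c ≥ 0, and let (ξ_i)_{i≥1} be a sequence of random variables taking values in {0,1} almost surely with P(ξ_i = 1) = p for all i and P(ξ_i = 1, ξ_j = 1) = p(p + c|i − j|^{2H−2}) for all i ≠ j. Then Var(ξ_1 + ⋯ + ξ_N)/N converges as N → ∞ to the finite limit p(1 − p) + 2·p·c·Σ_{k=1}^∞ k^{2H−2}; in particular the variance of the fractional binomial variable B_N(p, H, c) grows linearly in N. -/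
/-!
Since the `ξ i` are indicators, `cov(ξ i, ξ j) = P(ξ i = 1, ξ j = 1) - p²`, which is `p(1 - p)` on
the diagonal and `p c |i - j|^(2H-2)` off it. Summing the covariance matrix row by row below the
diagonal gives `Var(B_N) = N p(1 - p) + 2pc ∑_{m<N} ∑_{k<m} (k+1)^(2H-2)`: a Cesàro sum of the
partial sums of a `p`-series that converges because `2H - 2 < -1`.
-/

open MeasureTheory ProbabilityTheory Filter

namespace Finset

theorem sum_range_sum_range_of_symm {M : Type*} [AddCommMonoid M] (K : ℕ → ℕ → M)
    (hK : ∀ i j, K i j = K j i) (N : ℕ) :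
    ∑ i ∈ range N, ∑ j ∈ range N, K i j
      = ∑ i ∈ range N, K i i + 2 • ∑ m ∈ range N, ∑ i ∈ range m, K m i := by
  induction N with
  | zero => simp
  | succ N ih =>
    simp only [sum_range_succ, sum_add_distrib, ih, smul_add, two_nsmul]
    simp only [hK _ N]
    abel

theorem sum_range_comp_natCast_sub {R M : Type*} [AddCommGroupWithOne R] [AddCommMonoid M]
    (f : R → M) (m : ℕ) : ∑ i ∈ range m, f ((m : R) - i) = ∑ k ∈ range m, f (k + 1) := by
  rw [← sum_range_reflect]
  refine sum_congr rfl fun i hi => ?_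
  rw [Nat.cast_sub (by grind), Nat.cast_sub (by grind), Nat.cast_one]
  congr 1
  abel

end Finset

section ZeroOne

variable {Ω : Type*} [MeasurableSpace Ω] {μ : Measure Ω} {X Y : Ω → ℝ}

theorem memLp_of_ae_eq_zero_or_one [IsFiniteMeasure μ] (hX : Measurable X)
    (hX01 : ∀ᵐ ω ∂μ, X ω = 0 ∨ X ω = 1) (q : ENNReal) : MemLp X q μ :=
  MemLp.of_bound hX.aestronglyMeasurable 1 <| by
    filter_upwards [hX01] with ω hω
    rcases hω with h | h <;> simp [h]

theorem integral_mul_of_ae_eq_zero_or_one (hX : Measurable X) (hY : Measurable Y)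
    (hX01 : ∀ᵐ ω ∂μ, X ω = 0 ∨ X ω = 1) (hY01 : ∀ᵐ ω ∂μ, Y ω = 0 ∨ Y ω = 1) :
    μ[X * Y] = μ.real ({ω | X ω = 1} ∩ {ω | Y ω = 1}) := by
  have hind : X * Y =ᵐ[μ] ({ω | X ω = 1} ∩ {ω | Y ω = 1}).indicator 1 := by
    filter_upwards [hX01, hY01] with ω hXω hYω
    rcases hXω with h | h <;> rcases hYω with h' | h' <;> simp [h, h']
  rw [integral_congr_ae hind]
  exact integral_indicator_one
    ((hX (measurableSet_singleton 1)).inter (hY (measurableSet_singleton 1)))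

theorem covariance_of_ae_eq_zero_or_one [IsProbabilityMeasure μ] (hX : Measurable X)
    (hY : Measurable Y) (hX01 : ∀ᵐ ω ∂μ, X ω = 0 ∨ X ω = 1)
    (hY01 : ∀ᵐ ω ∂μ, Y ω = 0 ∨ Y ω = 1) :
    cov[X, Y; μ] = μ.real ({ω | X ω = 1} ∩ {ω | Y ω = 1})
      - μ.real {ω | X ω = 1} * μ.real {ω | Y ω = 1} := by
  have hmean {Z : Ω → ℝ} (hZ : Measurable Z) (hZ01 : ∀ᵐ ω ∂μ, Z ω = 0 ∨ Z ω = 1) :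
      μ[Z] = μ.real {ω | Z ω = 1} := by
    have hZZ : Z =ᵐ[μ] Z * Z := by
      filter_upwards [hZ01] with ω h
      rcases h with h | h <;> simp [h]
    rw [integral_congr_ae hZZ, integral_mul_of_ae_eq_zero_or_one hZ hZ hZ01 hZ01, Set.inter_self]
  rw [covariance_eq_sub (memLp_of_ae_eq_zero_or_one hX hX01 2)
    (memLp_of_ae_eq_zero_or_one hY hY01 2), integral_mul_of_ae_eq_zero_or_one hX hY hX01 hY01,
    hmean hX hX01, hmean hY hY01]

end ZeroOne

theorem summable_nat_add_one_rpow {a : ℝ} (ha : a < -1) :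
    Summable fun k : ℕ => ((k : ℝ) + 1) ^ a := by
  simpa using (summable_nat_add_iff 1).2 (Real.summable_nat_rpow.2 ha)

section GeneralizedBernoulli

variable {Ω : Type*} [MeasurableSpace Ω] {P : Measure Ω} [IsProbabilityMeasure P]
  {ξ : ℕ → Ω → ℝ} {p c a : ℝ}

theorem covariance_gbp (hp : 0 ≤ p) (hc : 0 ≤ c) (hm : ∀ i, Measurable (ξ i))
    (h01 : ∀ i, ∀ᵐ ω ∂P, ξ i ω = 0 ∨ ξ i ω = 1)
    (hP1 : ∀ i, P {ω | ξ i ω = 1} = ENNReal.ofReal p)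
    (hP2 : ∀ i j, i ≠ j → P ({ω | ξ i ω = 1} ∩ {ω | ξ j ω = 1}) =
      ENNReal.ofReal (p * (p + c * |(i : ℝ) - (j : ℝ)| ^ a))) (i j : ℕ) :
    cov[ξ i, ξ j; P] = if i = j then p * (1 - p) else p * c * |(i : ℝ) - (j : ℝ)| ^ a := by
  have hP1' (k : ℕ) : P.real {ω | ξ k ω = 1} = p := by
    rw [measureReal_def, hP1, ENNReal.toReal_ofReal hp]
  rw [covariance_of_ae_eq_zero_or_one (hm i) (hm j) (h01 i) (h01 j), hP1', hP1']
  split_ifs with hij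
  · rw [hij, Set.inter_self, hP1']
    ring
  · have hpos : 0 ≤ p * (p + c * |(i : ℝ) - (j : ℝ)| ^ a) := by positivity
    rw [measureReal_def, hP2 i j hij, ENNReal.toReal_ofReal hpos]
    ring

theorem variance_sum_range_gbp (hp : 0 ≤ p) (hc : 0 ≤ c) (hm : ∀ i, Measurable (ξ i))
    (h01 : ∀ i, ∀ᵐ ω ∂P, ξ i ω = 0 ∨ ξ i ω = 1)
    (hP1 : ∀ i, P {ω | ξ i ω = 1} = ENNReal.ofReal p)
    (hP2 : ∀ i j, i ≠ j → P ({ω | ξ i ω = 1} ∩ {ω | ξ j ω = 1}) =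
      ENNReal.ofReal (p * (p + c * |(i : ℝ) - (j : ℝ)| ^ a))) (N : ℕ) :
    Var[fun ω => ∑ i ∈ Finset.range N, ξ i ω; P]
      = N * (p * (1 - p))
        + 2 * (p * c) * ∑ m ∈ Finset.range N, ∑ k ∈ Finset.range m, ((k : ℝ) + 1) ^ a := by
  have hcov := covariance_gbp hp hc hm h01 hP1 hP2
  have hrow (m : ℕ) : ∑ i ∈ Finset.range m, cov[ξ m, ξ i; P]
      = p * c * ∑ k ∈ Finset.range m, ((k : ℝ) + 1) ^ a := by
    rw [← Finset.sum_range_comp_natCast_sub (· ^ a : ℝ → ℝ), Finset.mul_sum]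
    refine Finset.sum_congr rfl fun i hi => ?_
    have him : (i : ℝ) < m := by exact_mod_cast Finset.mem_range.1 hi
    rw [hcov, if_neg (by grind), abs_of_pos (by linarith)]
  rw [variance_fun_sum' fun i _ => memLp_of_ae_eq_zero_or_one (hm i) (h01 i) 2,
    Finset.sum_range_sum_range_of_symm _ fun i j => covariance_comm _ _, nsmul_eq_mul,
    Finset.sum_congr rfl fun m _ => hrow m, ← Finset.mul_sum]
  simp only [hcov, if_true, Finset.sum_const, Finset.card_range, nsmul_eq_mul]
  ring

end GeneralizedBernoulli

theorem gbp_variance_asymptotics_srd_general {Ω : Type*} [MeasurableSpace Ω] (P : Measure Ω)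
    [IsProbabilityMeasure P] (p H c : ℝ) (hp0 : 0 < p)
    (hH1 : H < 1 / 2) (hc : 0 ≤ c)
    (ξ : ℕ → Ω → ℝ) (hm : ∀ i, Measurable (ξ i))
    (h01 : ∀ i, ∀ᵐ ω ∂P, ξ i ω = 0 ∨ ξ i ω = 1)
    (hP1 : ∀ i, P {ω | ξ i ω = 1} = ENNReal.ofReal p)
    (hP2 : ∀ i j, i ≠ j → P ({ω | ξ i ω = 1} ∩ {ω | ξ j ω = 1}) =
      ENNReal.ofReal (p * (p + c * |(i : ℝ) - (j : ℝ)| ^ (2 * H - 2)))) :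
    Tendsto
      (fun N : ℕ => variance (fun ω => ∑ i ∈ Finset.range N, ξ i ω) P / (N : ℝ))
      atTop
      (nhds (p * (1 - p) + 2 * p * c * ∑' k : ℕ, ((k : ℝ) + 1) ^ (2 * H - 2))) := by
  have hsum := summable_nat_add_one_rpow (a := 2 * H - 2) (by linarith)
  have hlim := (tendsto_const_nhds (x := p * (1 - p))).add
    (hsum.hasSum.tendsto_sum_nat.cesaro.const_mul (2 * p * c))
  refine hlim.congr' ?_
  filter_upwards [eventually_ne_atTop 0] with N hN
  rw [variance_sum_range_gbp hp0.le hc hm h01 hP1 hP2 N]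
  field_simp

/-- For a GBP with `p ∈ (0,1)`, `H ∈ (0, 1/2)`, `c ≥ 0`, the variance of
`B_N = ξ_1 + ⋯ + ξ_N` grows linearly:
`Var(B_N)/N → p(1 − p) + 2·p·c·Σ_{k=1}^∞ k^(2H−2)` as `N → ∞`. -/
theorem gbp_variance_asymptotics_srd {Ω : Type*} [MeasurableSpace Ω] (P : Measure Ω)
    [IsProbabilityMeasure P] (p H c : ℝ) (hp0 : 0 < p) (hp1 : p < 1)
    (hH0 : 0 < H) (hH1 : H < 1 / 2) (hc : 0 ≤ c)
    (ξ : ℕ → Ω → ℝ) (hm : ∀ i, Measurable (ξ i))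
    (h01 : ∀ i, ∀ᵐ ω ∂P, ξ i ω = 0 ∨ ξ i ω = 1)
    (hP1 : ∀ i, P {ω | ξ i ω = 1} = ENNReal.ofReal p)
    (hP2 : ∀ i j, i ≠ j → P ({ω | ξ i ω = 1} ∩ {ω | ξ j ω = 1}) =
      ENNReal.ofReal (p * (p + c * |(i : ℝ) - (j : ℝ)| ^ (2 * H - 2)))) :
    Tendsto
      (fun N : ℕ => variance (fun ω => ∑ i ∈ Finset.range N, ξ i ω) P / (N : ℝ))
      atTop
      (nhds (p * (1 - p) + 2 * p * c * ∑' k : ℕ, ((k : ℝ) + 1) ^ (2 * H - 2))) :=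
  gbp_variance_asymptotics_srd_general P p H c hp0 hH1 hc ξ hm h01 hP1 hP2
end

section
/- Fix an integer N ≥ 3. Let p, p' ∈ (0,1), H, H' ∈ (0,1), and c, c' ∈ (0, ∞). If N·p = N·p', p·(p + c)^{N−1} = p'·(p' + c')^{N−1}, and N·p(1 − p) + 2·p·c·S_N(H) = N·p'(1 − p') + 2·p'·c'·S_N(H'), then p = p', c = c', and H = H'. In other words, the parameters (p, H, c) of the fractional binomial distribution are identified by its mean N·p, its value P(B_N = N) = p(p+c)^{N−1}, and its variance N·p(1−p) + 2·p·c·S_N(H). -/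
lemma S_strictMono (N : ℕ) (hN : 3 ≤ N) : StrictMono (S N) := by
  intro H H' h
  unfold S
  apply Finset.sum_lt_sum
  · intro k hk
    rw [Finset.mem_Icc] at hk
    have hk1 : (1:ℝ) ≤ (k:ℝ) := by exact_mod_cast hk.1
    have hkN : (k:ℝ) ≤ (N:ℝ) := by
      have : k ≤ N := by omega
      exact_mod_cast this
    have hnn : (0:ℝ) ≤ (N:ℝ) - (k:ℝ) := by linarith
    exact mul_le_mul_of_nonneg_left
      (Real.rpow_le_rpow_of_exponent_le hk1 (by linarith)) hnn
  · refine ⟨2, ?_, ?_⟩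
    · rw [Finset.mem_Icc]; omega
    · have h2 : ((2:ℕ):ℝ) = (2:ℝ) := by norm_num
      have hpos : (0:ℝ) < (N:ℝ) - ((2:ℕ):ℝ) := by
        rw [h2]
        have : (3:ℝ) ≤ (N:ℝ) := by exact_mod_cast hN
        linarith
      exact mul_lt_mul_of_pos_left
        (Real.rpow_lt_rpow_of_exponent_lt (by rw [h2]; norm_num) (by linarith)) hpos

/-- The parameters `(p, H, c)` of the fractional binomial distribution are
identified by its mean `N·p`, the value `P(B_N = N) = p(p+c)^(N−1)`, and its
variance `N·p(1−p) + 2·p·c·S_N(H)`, provided `N ≥ 3`. -/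
theorem frac_binom_identifiable (N : ℕ) (hN : 3 ≤ N)
    (p p' H H' c c' : ℝ)
    (hp0 : 0 < p) (hp1 : p < 1) (hp'0 : 0 < p') (hp'1 : p' < 1)
    (hH0 : 0 < H) (hH1 : H < 1) (hH'0 : 0 < H') (hH'1 : H' < 1)
    (hc : 0 < c) (hc' : 0 < c')
    (hmean : (N : ℝ) * p = (N : ℝ) * p')
    (htop : p * (p + c) ^ (N - 1) = p' * (p' + c') ^ (N - 1))
    (hvar : (N : ℝ) * (p * (1 - p)) + 2 * p * c * S N H =
      (N : ℝ) * (p' * (1 - p')) + 2 * p' * c' * S N H') :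
    p = p' ∧ c = c' ∧ H = H' := by
  have hNpos : (0:ℝ) < (N:ℝ) := by positivity
  have hpp : p = p' := by
    have := mul_left_cancel₀ (ne_of_gt hNpos) hmean
    exact this
  subst hpp
  have hpow : (p + c) ^ (N - 1) = (p + c') ^ (N - 1) :=
    mul_left_cancel₀ (ne_of_gt hp0) htop
  have hcc : c = c' := by
    have hn : N - 1 ≠ 0 := by omega
    rcases lt_trichotomy c c' with hlt | heq | hgt
    · have := pow_lt_pow_left₀ (show p + c < p + c' by linarith)
        (by linarith : (0:ℝ) ≤ p + c) hn
      linarith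
    · exact heq
    · have := pow_lt_pow_left₀ (show p + c' < p + c by linarith)
        (by linarith : (0:ℝ) ≤ p + c') hn
      linarith
  subst hcc
  have hS : S N H = S N H' := by
    have h2 : 2 * p * c * S N H = 2 * p * c * S N H' := by linarith
    exact mul_left_cancel₀ (by positivity) h2
  exact ⟨rfl, rfl, (S_strictMono N hN).injective hS⟩
end
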